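/- In an abelian category A, the map sending a torsion triple (S_0, S_1, S_2) to the pair of torsion pairs [(S_0, S_1 * S_2), (S_0 * S_1, S_2)] is a bijection between torsion triples in A and pairs of torsion pairs [(T, F), (T', F')] with T ⊆ T'; its inverse sends [(T, F), (T', F')] to (T, F ∩ T', F'). -/
import Mathlib


open CategoryTheory CategoryTheory.Limits

namespace Paper

variable {C : Type*} [Category C] [Abelian C]

/-- Membership in `S ∪ {0}`, up to isomorphism. -/
def MemS0 (S : Set C) (x : C) : Prop :=
  (∃ s ∈ S, Nonempty (x ≅ s)) ∨ IsZero x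

/-- `x ∈ (S)ₙ` : `x` admits a filtration `⊥ = c 0 ⊆ ⋯ ⊆ c n = ⊤` of subobjects whose
successive quotients lie in `S ∪ {0}`. -/
def MemFilt (S : Set C) (n : ℕ) (x : C) : Prop :=
  ∃ (c : Fin (n + 1) → Subobject x) (hc : Monotone c),
    c 0 = ⊥ ∧ c (Fin.last n) = ⊤ ∧
      ∀ i : Fin n,
        MemS0 S
          (cokernel (Subobject.ofLE (c i.castSucc) (c i.succ) (hc (Fin.castSucc_le_succ i))))

/-- The extension closure `⟨S⟩ = ⋃ₙ (S)ₙ`. -/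
def ExtClosure (S : Set C) : Set C := {x | ∃ n, MemFilt S n x}

/-- `X * Z` : the objects `y` admitting a short exact sequence `x ↪ y ↠ z` with
`x ∈ X` and `z ∈ Z`. -/
def SesStar (X Z : Set C) : Set C :=
  {y | ∃ (x z : C) (f : x ⟶ y) (g : y ⟶ z) (w : f ≫ g = 0),
      x ∈ X ∧ z ∈ Z ∧ (ShortComplex.mk f g w).ShortExact}

/-- `Gen S` : quotients of objects of `S`. -/
def GenCl (S : Set C) : Set C := {x | ∃ s ∈ S, ∃ f : s ⟶ x, Epi f}

/-- `Sub S` : subobjects of objects of `S`. -/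
def SubCl (S : Set C) : Set C := {x | ∃ s ∈ S, ∃ f : x ⟶ s, Mono f}

/-- `S^⊥` : objects receiving no nonzero morphism from objects of `S`. -/
def PerpR (S : Set C) : Set C := {x | ∀ s ∈ S, ∀ f : s ⟶ x, f = 0}

/-- `^⊥S` : objects admitting no nonzero morphism to objects of `S`. -/
def PerpL (S : Set C) : Set C := {x | ∀ s ∈ S, ∀ f : x ⟶ s, f = 0}

/-- A class is closed under quotients. -/
def ClosedUnderQuotients (X : Set C) : Prop :=
  ∀ ⦃y a : C⦄ (f : y ⟶ a), Epi f → y ∈ X → a ∈ X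

/-- A class is closed under subobjects. -/
def ClosedUnderSubobjects (X : Set C) : Prop :=
  ∀ ⦃a y : C⦄ (f : a ⟶ y), Mono f → y ∈ X → a ∈ X

/-- A class is closed under isomorphisms (i.e. is a strictly full subcategory). -/
def IsoClosed (X : Set C) : Prop := ∀ ⦃x y : C⦄, (x ≅ y) → x ∈ X → y ∈ X

/-- `(T, F)` is a torsion pair: both classes are strictly full, `Hom(T, F) = 0`,
and every object fits in a short exact sequence `t ↪ x ↠ f` with `t ∈ T`, `f ∈ F`. -/
def IsTorsionPair (Tc F : Set C) : Prop :=
  IsoClosed Tc ∧ IsoClosed F ∧ (∀ t ∈ Tc, ∀ f ∈ F, ∀ g : t ⟶ f, g = 0) ∧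
    ∀ y : C, y ∈ SesStar Tc F

/-- `(S₀, S₁, S₂)` is a torsion triple. -/
def IsTorsionTriple (S₀ S₁ S₂ : Set C) : Prop :=
  IsoClosed S₀ ∧ IsoClosed S₁ ∧ IsoClosed S₂ ∧
    (∀ s ∈ S₀, ∀ t ∈ S₁, ∀ g : s ⟶ t, g = 0) ∧
    (∀ s ∈ S₀, ∀ t ∈ S₂, ∀ g : s ⟶ t, g = 0) ∧
    (∀ s ∈ S₁, ∀ t ∈ S₂, ∀ g : s ⟶ t, g = 0) ∧
    ∀ y : C, y ∈ SesStar S₀ (SesStar S₁ S₂)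

end Paper

namespace Paper

/-- A noetherian abelian category: ascending chains of subobjects stabilise. -/
def NoethCat (C : Type*) [Category C] [Abelian C] : Prop :=
  ∀ (x : C) (f : ℕ →o Subobject x), ∃ n, ∀ m, n ≤ m → f n = f m

end Paper

namespace Paper

variable {C : Type*} [Category C] [Abelian C]

open CategoryTheory.Abelian


attribute [local instance] Pseudoelement.objectToSort Pseudoelement.homToFun


lemma isZero_of_mono_eq_zero {x y : C} (f : x ⟶ y) [Mono f] (h : f = 0) : IsZero x := by
  rw [IsZero.iff_id_eq_zero]
  exact (cancel_mono f).1 (by simp [h])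

lemma isZero_of_epi_eq_zero {x y : C} (g : x ⟶ y) [Epi g] (h : g = 0) : IsZero y := by
  rw [IsZero.iff_id_eq_zero]
  exact (cancel_epi g).1 (by simp [h])

lemma isIso_f_of_isZero {S : ShortComplex C} (hS : S.ShortExact) (h : IsZero S.X₃) :
    IsIso S.f := by
  haveI := hS.mono_f
  obtain ⟨l, hl⟩ := KernelFork.IsLimit.lift' hS.fIsKernel (𝟙 S.X₂)
    (by rw [h.eq_of_tgt S.g 0, comp_zero])
  have hl' : l ≫ S.f = 𝟙 S.X₂ := hl
  refine ⟨l, ?_, hl'⟩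
  rw [← cancel_mono S.f, Category.assoc, hl', Category.comp_id, Category.id_comp]

lemma isIso_g_of_isZero {S : ShortComplex C} (hS : S.ShortExact) (h : IsZero S.X₁) :
    IsIso S.g := by
  haveI := hS.epi_g
  obtain ⟨l, hl⟩ := CokernelCofork.IsColimit.desc' hS.gIsCokernel (𝟙 S.X₂)
    (by rw [h.eq_of_src S.f 0, zero_comp])
  have hl' : S.g ≫ l = 𝟙 S.X₂ := hl
  refine ⟨l, hl', ?_⟩
  rw [← cancel_epi S.g, ← Category.assoc, hl', Category.comp_id, Category.id_comp]

lemma sesStar_isoClosed (X Z : Set C) : IsoClosed (SesStar X Z) := by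
  rintro y y' i ⟨x, z, f, g, w, hx, hz, hse⟩
  have e : ShortComplex.mk f g w ≅ ShortComplex.mk (f ≫ i.hom) (i.inv ≫ g)
      (by rw [Category.assoc, Iso.hom_inv_id_assoc, w]) :=
    ShortComplex.isoMk (Iso.refl _) i (Iso.refl _) (by simp) (by simp)
  exact ⟨x, z, f ≫ i.hom, i.inv ≫ g, _, hx, hz, ShortComplex.shortExact_of_iso e hse⟩

lemma mem_sesStar_of_left {X Z : Set C} {x z : C} (hx : x ∈ X) (hz0 : IsZero z)
    (hz : z ∈ Z) : x ∈ SesStar X Z := by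
  haveI : Epi (0 : x ⟶ z) := ⟨fun g h _ => hz0.eq_of_src g h⟩
  exact ⟨x, z, 𝟙 x, 0, by simp, hx, hz,
    { exact := (ShortComplex.exact_iff_epi _ rfl).2 inferInstance }⟩

lemma mem_sesStar_of_right {X Z : Set C} {x z : C} (hz : z ∈ Z) (hx0 : IsZero x)
    (hx : x ∈ X) : z ∈ SesStar X Z := by
  haveI : Mono (0 : x ⟶ z) := ⟨fun g h _ => hx0.eq_of_tgt g h⟩
  exact ⟨x, z, 0, 𝟙 z, by simp, hx, hz,
    { exact := (ShortComplex.exact_iff_mono _ rfl).2 inferInstance }⟩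

lemma hom_zero_into {S : ShortComplex C} (hS : S.ShortExact) {t : C}
    (h1 : ∀ f : t ⟶ S.X₁, f = 0) (h3 : ∀ f : t ⟶ S.X₃, f = 0) (f : t ⟶ S.X₂) : f = 0 := by
  obtain ⟨l, hl⟩ := KernelFork.IsLimit.lift' hS.fIsKernel f (h3 _)
  rw [← show l ≫ S.f = f from hl, h1 l, zero_comp]

lemma hom_zero_out {S : ShortComplex C} (hS : S.ShortExact) {a : C}
    (h1 : ∀ f : S.X₁ ⟶ a, f = 0) (h3 : ∀ f : S.X₃ ⟶ a, f = 0) (f : S.X₂ ⟶ a) : f = 0 := by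
  obtain ⟨l, hl⟩ := CokernelCofork.IsColimit.desc' hS.gIsCokernel f (h1 _)
  rw [← show S.g ≫ l = f from hl, h3 l, comp_zero]

lemma mem_left_of_perp {T F : Set C} (h : IsTorsionPair T F) {x : C}
    (hx : ∀ f ∈ F, ∀ g : x ⟶ f, g = 0) : x ∈ T := by
  obtain ⟨t, f, i, p, w, ht, hf, hse⟩ := h.2.2.2 x
  haveI := hse.epi_g
  haveI : IsIso i := isIso_f_of_isZero hse (isZero_of_epi_eq_zero p (hx f hf p))
  exact h.1 (asIso i) ht

lemma mem_right_of_perp {T F : Set C} (h : IsTorsionPair T F) {x : C}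
    (hx : ∀ t ∈ T, ∀ g : t ⟶ x, g = 0) : x ∈ F := by
  obtain ⟨t, f, i, p, w, ht, hf, hse⟩ := h.2.2.2 x
  haveI := hse.mono_f
  haveI : IsIso p := isIso_g_of_isZero hse (isZero_of_mono_eq_zero i (hx t ht i))
  exact h.2.1 (asIso p).symm hf

lemma torsion_closed_quot {T F : Set C} (h : IsTorsionPair T F) : ClosedUnderQuotients T := by
  intro y a g hg hy
  refine mem_left_of_perp h (fun f hf q => ?_)
  haveI := hg
  exact (cancel_epi g).1 (by rw [comp_zero]; exact h.2.2.1 y hy f hf (g ≫ q))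

lemma torsionfree_closed_sub {T F : Set C} (h : IsTorsionPair T F) : ClosedUnderSubobjects F := by
  intro a y f hf hy
  refine mem_right_of_perp h (fun t ht g => ?_)
  haveI := hf
  exact (cancel_mono f).1 (by rw [zero_comp]; exact h.2.2.1 t ht y hy (g ≫ f))

lemma zero_mem_left {T F : Set C} (h : IsTorsionPair T F) {x : C} (hx : IsZero x) : x ∈ T :=
  mem_left_of_perp h (fun f _ g => hx.eq_of_src g 0)

lemma zero_mem_right {T F : Set C} (h : IsTorsionPair T F) {x : C} (hx : IsZero x) : x ∈ F :=
  mem_right_of_perp h (fun t _ g => hx.eq_of_tgt g 0)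

lemma left_zero_of_sesStar {X Z : Set C} (hX : IsoClosed X) {y : C} (hy0 : IsZero y)
    (hy : y ∈ SesStar X Z) {x' : C} (hx'0 : IsZero x') : x' ∈ X := by
  obtain ⟨x, z, f, g, w, hx, hz, hse⟩ := hy
  haveI := hse.mono_f
  have hx0 : IsZero x := isZero_of_mono_eq_zero f (hy0.eq_of_tgt f 0)
  exact hX (hx0.iso hx'0) hx




lemma sesStar_assoc₁ {X Y Z : Set C} {y : C} (hy : y ∈ SesStar X (SesStar Y Z)) :
    y ∈ SesStar (SesStar X Y) Z := by
  obtain ⟨x₀, w, f₀, g₀, w₀, hx₀, ⟨x₁, x₂, f₁, g₁, w₁, hx₁, hx₂, hse₁⟩, hse₀⟩ := hy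
  haveI := hse₀.mono_f; haveI := hse₀.epi_g; haveI := hse₁.mono_f; haveI := hse₁.epi_g
  let g : y ⟶ x₂ := g₀ ≫ g₁
  haveI : Epi g := epi_comp _ _
  let ι : kernel g ⟶ y := kernel.ι g
  have wse : ι ≫ g = 0 := kernel.condition g
  have hOuter : (ShortComplex.mk ι g wse).ShortExact :=
    { exact := ShortComplex.exact_of_f_is_kernel _ (kernelIsKernel g) }
  have hk : f₀ ≫ g = 0 := by rw [show f₀ ≫ g = (f₀ ≫ g₀) ≫ g₁ by simp [g], w₀, zero_comp]
  let k : x₀ ⟶ kernel g := kernel.lift g f₀ hk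
  have hkι : k ≫ ι = f₀ := kernel.lift_ι g f₀ hk
  haveI : Mono (k ≫ ι) := by rw [hkι]; infer_instance
  haveI : Mono k := mono_of_mono k ι
  obtain ⟨q, hq⟩ := KernelFork.IsLimit.lift' hse₁.fIsKernel (ι ≫ g₀)
    (by rw [Category.assoc]; exact wse)
  have hq : q ≫ f₁ = ι ≫ g₀ := hq
  have hkq : k ≫ q = 0 := by
    rw [← cancel_mono f₁, Category.assoc, hq, zero_comp, ← Category.assoc, hkι, w₀]
  haveI : Epi q := by
    apply Pseudoelement.epi_of_pseudo_surjective
    intro b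
    obtain ⟨a, ha⟩ := Pseudoelement.pseudo_surjective_of_epi g₀ (f₁ b)
    have hga : g a = 0 := by
      rw [show g a = (g₀ ≫ g₁) a from rfl, Pseudoelement.comp_apply, ha,
        ← Pseudoelement.comp_apply, w₁, Pseudoelement.zero_apply]
    obtain ⟨u₀, hu₀⟩ := Pseudoelement.pseudo_exact_of_exact hOuter.exact a hga
    refine ⟨u₀, Pseudoelement.pseudo_injective_of_mono f₁ ?_⟩
    rw [← Pseudoelement.comp_apply, hq, Pseudoelement.comp_apply, hu₀, ha]
  have hInner : (ShortComplex.mk k q hkq).ShortExact :=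
    { exact := by
        apply Pseudoelement.exact_of_pseudo_exact
        intro b hb
        have : g₀ (ι b) = 0 := by
          rw [← Pseudoelement.comp_apply, ← hq, Pseudoelement.comp_apply, hb,
            Pseudoelement.apply_zero]
        obtain ⟨a, ha⟩ := Pseudoelement.pseudo_exact_of_exact hse₀.exact (ι b) this
        refine ⟨a, Pseudoelement.pseudo_injective_of_mono ι ?_⟩
        rw [← Pseudoelement.comp_apply, hkι, ha] }
  exact ⟨kernel g, x₂, ι, g, wse, ⟨x₀, x₁, k, q, hkq, hx₀, hx₁, hInner⟩, hx₂, hOuter⟩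

lemma sesStar_assoc₂ {X Y Z : Set C} {y : C} (hy : y ∈ SesStar (SesStar X Y) Z) :
    y ∈ SesStar X (SesStar Y Z) := by
  obtain ⟨w, x₂, n, p, w₀, ⟨x₀, x₁, m, e, w₁, hx₀, hx₁, hse₁⟩, hx₂, hse₀⟩ := hy
  haveI := hse₀.mono_f; haveI := hse₀.epi_g; haveI := hse₁.mono_f; haveI := hse₁.epi_g
  let c : x₀ ⟶ y := m ≫ n
  haveI : Mono c := mono_comp _ _
  let π : y ⟶ cokernel c := cokernel.π c
  have wse : c ≫ π = 0 := cokernel.condition c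
  have hOuter : (ShortComplex.mk c π wse).ShortExact :=
    { exact := ShortComplex.exact_of_g_is_cokernel _ (cokernelIsCokernel c) }
  have hr : c ≫ p = 0 := by rw [show c ≫ p = m ≫ (n ≫ p) by simp [c], w₀, comp_zero]
  let r : cokernel c ⟶ x₂ := cokernel.desc c p hr
  have hπr : π ≫ r = p := cokernel.π_desc c p hr
  haveI : Epi (π ≫ r) := by rw [hπr]; infer_instance
  haveI : Epi r := epi_of_epi π r
  obtain ⟨j, hj⟩ := CokernelCofork.IsColimit.desc' hse₁.gIsCokernel (n ≫ π)
    (by rw [← Category.assoc]; exact wse)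
  have hj : e ≫ j = n ≫ π := hj
  have hjr : j ≫ r = 0 := by
    rw [← cancel_epi e, ← Category.assoc, hj, Category.assoc, hπr, w₀, comp_zero]
  haveI : Mono j := by
    apply Pseudoelement.mono_of_zero_of_map_zero
    intro b hb
    obtain ⟨a, ha⟩ := Pseudoelement.pseudo_surjective_of_epi e b
    have : π (n a) = 0 := by
      rw [← Pseudoelement.comp_apply, ← hj, Pseudoelement.comp_apply, ha, hb]
    obtain ⟨t₀, ht₀⟩ := Pseudoelement.pseudo_exact_of_exact hOuter.exact (n a) this
    have hma : m t₀ = a := by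
      apply Pseudoelement.pseudo_injective_of_mono n
      rw [← Pseudoelement.comp_apply]; exact ht₀
    rw [← ha, ← hma, ← Pseudoelement.comp_apply, w₁, Pseudoelement.zero_apply]
  have hInner : (ShortComplex.mk j r hjr).ShortExact :=
    { exact := by
        apply Pseudoelement.exact_of_pseudo_exact
        intro v₀ hv₀
        obtain ⟨a, ha⟩ := Pseudoelement.pseudo_surjective_of_epi π v₀
        have : p a = 0 := by
          rw [← hπr, Pseudoelement.comp_apply, ha, hv₀]
        obtain ⟨a', ha'⟩ := Pseudoelement.pseudo_exact_of_exact hse₀.exact a this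
        refine ⟨e a', ?_⟩
        rw [← Pseudoelement.comp_apply, hj, Pseudoelement.comp_apply, ha', ha] }
  exact ⟨x₀, cokernel c, c, π, wse, hx₀, ⟨x₁, x₂, j, r, hjr, hx₁, hx₂, hInner⟩, hOuter⟩



/-- The assignment
`(S₀, S₁, S₂) ↦ [(S₀, S₁ * S₂), (S₀ * S₁, S₂)]` is a bijection from torsion triples to
pairs of torsion pairs `[(T, F), (T', F')]` with `T ⊆ T'`, with inverse
`[(T, F), (T', F')] ↦ (T, F ∩ T', F')`.  This is expressed by saying that both maps are
well defined and that both composites are the identity. -/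
theorem statement16 :
    -- `Φ` is well defined
    (∀ S₀ S₁ S₂ : Set C, IsTorsionTriple S₀ S₁ S₂ →
      IsTorsionPair S₀ (SesStar S₁ S₂) ∧ IsTorsionPair (SesStar S₀ S₁) S₂ ∧
        S₀ ⊆ SesStar S₀ S₁) ∧
    -- `Φ'` is well defined
    (∀ Tc F Tc' F' : Set C, IsTorsionPair Tc F → IsTorsionPair Tc' F' → Tc ⊆ Tc' →
      IsTorsionTriple Tc (F ∩ Tc') F') ∧
    -- `Φ' ∘ Φ = id`
    (∀ S₀ S₁ S₂ : Set C, IsTorsionTriple S₀ S₁ S₂ →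
      (SesStar S₁ S₂) ∩ (SesStar S₀ S₁) = S₁) ∧
    -- `Φ ∘ Φ' = id`
    (∀ Tc F Tc' F' : Set C, IsTorsionPair Tc F → IsTorsionPair Tc' F' → Tc ⊆ Tc' →
      SesStar (F ∩ Tc') F' = F ∧ SesStar Tc (F ∩ Tc') = Tc') := by
  have hΦ : ∀ S₀ S₁ S₂ : Set C, IsTorsionTriple S₀ S₁ S₂ →
      IsTorsionPair S₀ (SesStar S₁ S₂) ∧ IsTorsionPair (SesStar S₀ S₁) S₂ ∧
        S₀ ⊆ SesStar S₀ S₁ := by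
    intro S₀ S₁ S₂ h
    obtain ⟨h0, h1, h2, h01, h02, h12, hdec⟩ := h
    have pair1 : IsTorsionPair S₀ (SesStar S₁ S₂) := by
      refine ⟨h0, sesStar_isoClosed _ _, ?_, hdec⟩
      rintro t ht f ⟨x, z, i, p, w, hx, hz, hse⟩ g
      exact hom_zero_into hse (fun f' => h01 t ht x hx f') (fun f' => h02 t ht z hz f') g
    have pair2 : IsTorsionPair (SesStar S₀ S₁) S₂ := by
      refine ⟨sesStar_isoClosed _ _, h2, ?_, fun y => sesStar_assoc₁ (hdec y)⟩
      rintro t ⟨x, z, i, p, w, hx, hz, hse⟩ f hf g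
      exact hom_zero_out hse (fun f' => h02 x hx f hf f') (fun f' => h12 z hz f hf f') g
    have h1z : ∀ x : C, IsZero x → x ∈ S₁ := fun x hx =>
      left_zero_of_sesStar h1 (isZero_zero C) (zero_mem_right pair1 (isZero_zero C)) hx
    exact ⟨pair1, pair2, fun x hx =>
      mem_sesStar_of_left hx (isZero_zero C) (h1z _ (isZero_zero C))⟩
  refine ⟨hΦ, ?_, ?_, ?_⟩
  · -- Φ' is well defined
    intro T F T' F' hTF hTF' hsub
    obtain ⟨hT, hF, hhom, hdec⟩ := hTF
    obtain ⟨hT', hF', hhom', hdec'⟩ := hTF'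
    refine ⟨hT, fun x y i hx => ⟨hF i hx.1, hT' i hx.2⟩, hF',
      fun s hs t ht g => hhom s hs t ht.1 g,
      fun s hs t ht g => hhom' s (hsub hs) t ht g,
      fun s hs t ht g => hhom' s hs.2 t ht g, ?_⟩
    intro y
    obtain ⟨t', f', n, p, w, ht', hf', hse⟩ := hdec' y
    have ht'mem : t' ∈ SesStar T (F ∩ T') := by
      obtain ⟨t, f, i, q, w', ht, hf, hse'⟩ := hdec t'
      haveI := hse'.epi_g
      exact ⟨t, f, i, q, w', ht, ⟨hf, torsion_closed_quot ⟨hT', hF', hhom', hdec'⟩ q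
        inferInstance ht'⟩, hse'⟩
    exact sesStar_assoc₂ ⟨t', f', n, p, w, ht'mem, hf', hse⟩
  · -- Φ' ∘ Φ = id
    intro S₀ S₁ S₂ h
    obtain ⟨pair1, pair2, -⟩ := hΦ S₀ S₁ S₂ h
    ext x
    constructor
    · rintro ⟨⟨s₁, s₂, i, p, w, hs₁, hs₂, hse⟩, h01mem⟩
      haveI := hse.epi_g
      haveI : IsIso i := isIso_f_of_isZero hse
        (isZero_of_epi_eq_zero p (pair2.2.2.1 x h01mem s₂ hs₂ p))
      exact h.2.1 (asIso i) hs₁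
    · intro hs₁
      exact ⟨mem_sesStar_of_left hs₁ (isZero_zero C) (zero_mem_right pair2 (isZero_zero C)),
        mem_sesStar_of_right hs₁ (isZero_zero C) (zero_mem_left pair1 (isZero_zero C))⟩
  · -- Φ ∘ Φ' = id
    intro T F T' F' hTF hTF' hsub
    constructor
    · ext y
      constructor
      · rintro ⟨a, b, i, p, w, ha, hb, hse⟩
        refine mem_right_of_perp hTF (fun t ht g => ?_)
        exact hom_zero_into hse (fun f' => hTF.2.2.1 t ht a ha.1 f')
          (fun f' => hTF'.2.2.1 t (hsub ht) b hb f') g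
      · intro hf
        obtain ⟨t', f', n, p, w, ht', hf', hse⟩ := hTF'.2.2.2 y
        haveI := hse.mono_f
        exact ⟨t', f', n, p, w,
          ⟨torsionfree_closed_sub hTF n inferInstance hf, ht'⟩, hf', hse⟩
    · ext y
      constructor
      · rintro ⟨a, b, i, p, w, ha, hb, hse⟩
        refine mem_left_of_perp hTF' (fun f' hf' g => ?_)
        exact hom_zero_out hse (fun f'' => hTF'.2.2.1 a (hsub ha) f' hf' f'')
          (fun f'' => hTF'.2.2.1 b hb.2 f' hf' f'') g
      · intro ht'
        obtain ⟨t, f, i, p, w, ht, hf, hse⟩ := hTF.2.2.2 y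
        haveI := hse.epi_g
        exact ⟨t, f, i, p, w, ht,
          ⟨hf, torsion_closed_quot hTF' p inferInstance ht'⟩, hse⟩


end Paper
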